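/- Let M be a positive even integer, let q be a nonzero element of a field, and let x_m, y_m (m ∈ ℤ/Mℤ) be nonzero field elements with P_m := Σ_{a=1}^{M} (Π_{i=1}^{a-1} x_{m+i}) (Π_{i=a+1}^{M} y_{m+i}) ≠ 0 for all m (indices modulo M). Define x̄_m = q^{-1} x_m P_m/P_{m-1} and ȳ_m = y_m P_{m-1}/P_m. Then Π_{j=1}^{M/2} (x̄_{2j}/ȳ_{2j-1}) = q^{-M/2} Π_{j=1}^{M/2} (x_{2j}/y_{2j-1}); that is, for even M the quantity Π_{j=1}^{M/2} x_{2j}/y_{2j-1} is an additional conserved quantity up to the indicated power of q. -/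
import Mathlib


/-- `P_m = ∑_{a=1}^{M} (∏_{i=1}^{a-1} x_{m+i}) (∏_{i=a+1}^{M} y_{m+i})`,
indices taken modulo `M`. -/
def Ppoly {F : Type*} [Field F] (M : ℕ) (x y : ZMod M → F) (m : ZMod M) : F :=
  ∑ a ∈ Finset.Icc 1 M,
    (∏ i ∈ Finset.Ico 1 a, x (m + (i : ZMod M)))
      * ∏ i ∈ Finset.Icc (a + 1) M, y (m + (i : ZMod M))

/-- `x̄_m = q⁻¹ x_m P_m / P_{m-1}`. -/
def xBar {F : Type*} [Field F] (M : ℕ) (q : F) (x y : ZMod M → F) (m : ZMod M) : F :=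
  q⁻¹ * x m * Ppoly M x y m / Ppoly M x y (m - 1)

/-- `ȳ_m = y_m P_{m-1} / P_m`. -/
def yBar {F : Type*} [Field F] (M : ℕ) (x y : ZMod M → F) (m : ZMod M) : F :=
  y m * Ppoly M x y (m - 1) / Ppoly M x y m

lemma cyc_prod {F : Type*} [CommMonoid F] (M n : ℕ) (h2n : 2 * n = M)
    (P : ZMod M → F) :
    (∏ j ∈ Finset.range n, P ((2 * j + 2 : ℕ) : ZMod M))
      = ∏ j ∈ Finset.range n, P ((2 * j : ℕ) : ZMod M) := by
  rw [← Fin.prod_univ_eq_prod_range (fun j => P ((2*j+2 : ℕ) : ZMod M)) n,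
      ← Fin.prod_univ_eq_prod_range (fun j => P ((2*j : ℕ) : ZMod M)) n,
      ← Equiv.prod_comp (finRotate n) (fun i => P ((2*(i : ℕ) : ℕ) : ZMod M))]
  apply Finset.prod_congr rfl
  intro i _
  show P _ = P _
  congr 1
  have hval : ((finRotate n i : Fin n) : ℕ) = ((i : ℕ) + 1) % n := by
    obtain ⟨m, rfl⟩ : ∃ m, n = m + 1 := ⟨n - 1, by have := i.pos; omega⟩
    rw [finRotate_succ_apply]
    have := i.isLt
    simp [Fin.val_add, Fin.val_one]
  rw [hval, ZMod.natCast_eq_natCast_iff]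
  have h1 : ((i : ℕ) + 1) % n ≡ (i : ℕ) + 1 [MOD n] := Nat.mod_modEq _ _
  have h2 : 2 * (((i : ℕ) + 1) % n) ≡ 2 * ((i : ℕ) + 1) [MOD 2 * n] := h1.mul_left' 2
  rw [h2n] at h2
  calc (2 * (i:ℕ) + 2 : ℕ) = 2 * ((i:ℕ)+1) := by ring
    _ ≡ 2 * (((i : ℕ) + 1) % n) [MOD M] := h2.symm

/-- for even `M`, the `q`-Painlevé map of type `A_{M-1}^{(1)}` satisfies
`∏_{j=1}^{M/2} x̄_{2j}/ȳ_{2j-1} = q^{-M/2} ∏_{j=1}^{M/2} x_{2j}/y_{2j-1}`; for even `M`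
the quantity `∏_{j=1}^{M/2} x_{2j}/y_{2j-1}` is an additional conserved quantity up to
the indicated power of `q`. -/
theorem qPainleve_A_extra_conserved
    {F : Type*} [Field F] (M : ℕ) (hM : 1 ≤ M) (hMeven : Even M)
    (q : F) (hq : q ≠ 0)
    (x y : ZMod M → F) (hx : ∀ m, x m ≠ 0) (hy : ∀ m, y m ≠ 0)
    (hP : ∀ m, Ppoly M x y m ≠ 0) :
    (∏ j ∈ Finset.range (M / 2),
        xBar M q x y ((2 * j + 2 : ℕ) : ZMod M) / yBar M x y ((2 * j + 1 : ℕ) : ZMod M))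
      = q⁻¹ ^ (M / 2)
        * ∏ j ∈ Finset.range (M / 2),
            x ((2 * j + 2 : ℕ) : ZMod M) / y ((2 * j + 1 : ℕ) : ZMod M) := by
  have h2n : 2 * (M / 2) = M := by
    have := Nat.div_two_mul_two_of_even hMeven; omega
  have term : ∀ j ∈ Finset.range (M / 2),
      xBar M q x y ((2 * j + 2 : ℕ) : ZMod M) / yBar M x y ((2 * j + 1 : ℕ) : ZMod M)
      = (q⁻¹ * (x ((2 * j + 2 : ℕ) : ZMod M) / y ((2 * j + 1 : ℕ) : ZMod M)))
        * (Ppoly M x y ((2 * j + 2 : ℕ) : ZMod M) / Ppoly M x y ((2 * j : ℕ) : ZMod M)) := by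
    intro j _
    have e1 : ((2 * j + 2 : ℕ) : ZMod M) - 1 = ((2 * j + 1 : ℕ) : ZMod M) := by
      push_cast; ring
    have e2 : ((2 * j + 1 : ℕ) : ZMod M) - 1 = ((2 * j : ℕ) : ZMod M) := by
      push_cast; ring
    rw [xBar, yBar, e1, e2]
    field_simp
    ring_nf
    rw [mul_inv_cancel_right₀ (hP _)]
  rw [Finset.prod_congr rfl term, Finset.prod_mul_distrib, Finset.prod_mul_distrib,
    Finset.prod_const, Finset.card_range, Finset.prod_div_distrib, Finset.prod_div_distrib,
    cyc_prod M (M / 2) h2n (Ppoly M x y),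
    div_self (Finset.prod_ne_zero_iff.mpr fun j _ => hP _), mul_one]
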